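/- arXiv:2311.01637 — 2 statements merged into one kernel-verified Lean document; each statement's English description precedes it below -/
import Mathlib

section
/- Let (A,q) be a metric group and define det : O(A,q) → ℚ̂ˣ_{>0}/(ℚˣ_{>0})² by sending g to the class of the natural number |(g−1)A| (the order of the image subgroup of g − id). Then det is a group homomorphism. -/
section UnitsFacts
variable {k : Type*} [Field k]


/-- The set of `n`-th roots of unity in `kˣ` has at most `n` elements (`n > 0`). -/
lemma aux_card_rootsOfUnity_le (n : ℕ) (hn : 0 < n) :
    Nat.card (rootsOfUnity n k) ≤ n := by
  haveI : NeZero n := ⟨hn.ne'⟩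
  exact card_rootsOfUnity k n

/-- If `ξ` has order dividing the order of `ζ` (of finite order), then `ξ ∈ ⟨ζ⟩`. -/
lemma aux_mem_zpowers {ζ ξ : kˣ} (hζ : IsOfFinOrder ζ)
    (hdvd : ξ ^ (orderOf ζ) = 1) : ξ ∈ Subgroup.zpowers ζ := by
  set n := orderOf ζ with hn
  have hnpos : 0 < n := hζ.orderOf_pos
  haveI : NeZero n := ⟨hnpos.ne'⟩
  have hle : Subgroup.zpowers ζ ≤ rootsOfUnity n k := by
    rw [Subgroup.zpowers_le, mem_rootsOfUnity]
    exact pow_orderOf_eq_one ζ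
  have hcard : Nat.card (rootsOfUnity n k) ≤ Nat.card (Subgroup.zpowers ζ) := by
    rw [Nat.card_zpowers]
    exact aux_card_rootsOfUnity_le n hnpos
  have := Subgroup.eq_of_le_of_card_ge hle hcard
  rw [this, mem_rootsOfUnity]
  exact hdvd

/-- Two torsion elements of `kˣ` have a combination of order the lcm. -/
lemma aux_lcm {ζ ξ : kˣ} (hζ : IsOfFinOrder ζ) (hξ : IsOfFinOrder ξ) :
    ∃ α β : ℤ, orderOf (ζ ^ α * ξ ^ β) = Nat.lcm (orderOf ζ) (orderOf ξ) := by
  set n := orderOf ζ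
  set m := orderOf ξ
  set L := Nat.lcm n m with hL
  have hnpos : 0 < n := hζ.orderOf_pos
  haveI : NeZero n := ⟨hnpos.ne'⟩
  have hmpos : 0 < m := hξ.orderOf_pos
  have hLpos : 0 < L := Nat.lcm_pos hnpos hmpos
  set K := Subgroup.closure ({ζ, ξ} : Set kˣ) with hK
  have hζK : ζ ∈ K := Subgroup.subset_closure (by simp)
  have hξK : ξ ∈ K := Subgroup.subset_closure (by simp)
  have hle : K ≤ rootsOfUnity L k := by
    rw [hK, Subgroup.closure_le]
    rintro x (rfl | rfl)
    · rw [SetLike.mem_coe, mem_rootsOfUnity]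
      exact orderOf_dvd_iff_pow_eq_one.mp (Nat.dvd_lcm_left n m)
    · rw [SetLike.mem_coe, mem_rootsOfUnity]
      exact orderOf_dvd_iff_pow_eq_one.mp (Nat.dvd_lcm_right n m)
  haveI : NeZero L := ⟨hLpos.ne'⟩
  haveI : Finite K :=
    Finite.of_injective (fun x : K => (⟨x.1, hle x.2⟩ : rootsOfUnity L k))
      (fun a b hab => Subtype.ext (Subtype.mk_eq_mk.mp hab))
  haveI : IsCyclic K :=
    isCyclic_of_subgroup_isDomain ((Units.coeHom k).comp K.subtype)
      (fun a b hab => Subtype.ext (Units.ext hab))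
  haveI : Fintype K := Fintype.ofFinite _
  obtain ⟨η, hη⟩ := IsCyclic.exists_monoid_generator (α := K)
  have hcardK_le : Nat.card K ≤ L := by
    calc Nat.card K ≤ Nat.card (rootsOfUnity L k) := by
          apply Nat.card_le_card_of_injective
            (fun x : K => (⟨x.1, hle x.2⟩ : rootsOfUnity L k))
          intro a b hab
          exact Subtype.ext (Subtype.mk_eq_mk.mp hab)
        _ ≤ L := aux_card_rootsOfUnity_le L hLpos
  have hdvdK : L ∣ Nat.card K := by
    apply Nat.lcm_dvd
    · exact K.orderOf_dvd_natCard hζK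
    · exact K.orderOf_dvd_natCard hξK
  have hcardK : Nat.card K = L := le_antisymm hcardK_le (Nat.le_of_dvd (Nat.card_pos) hdvdK)
  have hordη : orderOf (η : kˣ) = L := by
    rw [show orderOf (η : kˣ) = orderOf η from
      orderOf_injective K.subtype Subtype.coe_injective η]
    have htop : Subgroup.zpowers η = ⊤ := by
      ext x
      simp only [Subgroup.mem_top, iff_true]
      obtain ⟨n, hn⟩ := hη x
      exact ⟨(n : ℤ), by exact_mod_cast hn⟩
    rw [← Nat.card_zpowers, htop, ← hcardK]
    exact Nat.card_congr Subgroup.topEquiv.toEquiv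
  obtain ⟨α, β, hab⟩ := Subgroup.mem_closure_pair.mp (η.2 : (η : kˣ) ∈ K)
  exact ⟨α, β, by rw [hab]; exact hordη⟩

/-- character independence: `|Hom(S, kˣ)| ≤ |S|` for finite abelian `S`. -/
lemma aux_hom_card_le (S : Type*) [AddCommGroup S] [Finite S] :
    Nat.card (S →+ Additive kˣ) ≤ Nat.card S := by
  haveI : Fintype S := Fintype.ofFinite S
  set J : (S →+ Additive kˣ) → (Multiplicative S →* k) :=
    fun φ => (Units.coeHom k).comp (AddMonoidHom.toMultiplicativeLeft φ) with hJ
  have hJinj : Function.Injective J := by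
    intro φ ψ h
    apply AddMonoidHom.toMultiplicativeLeft.injective
    ext x
    exact DFunLike.congr_fun h x
  have hli : LinearIndependent k (fun φ : (S →+ Additive kˣ) => ⇑(J φ)) :=
    (linearIndependent_monoidHom (Multiplicative S) k).comp J hJinj
  haveI : Finite (S →+ Additive kˣ) := hli.finite
  haveI : Fintype (S →+ Additive kˣ) := Fintype.ofFinite _
  have := hli.fintype_card_le_finrank
  rw [Module.finrank_pi] at this
  simpa [Nat.card_eq_fintype_card] using this

lemma aux_hom_finite (S : Type*) [AddCommGroup S] [Finite S] :
    Finite (S →+ Additive kˣ) := by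
  haveI : Fintype S := Fintype.ofFinite S
  set J : (S →+ Additive kˣ) → (Multiplicative S →* k) :=
    fun φ => (Units.coeHom k).comp (AddMonoidHom.toMultiplicativeLeft φ) with hJ
  have hJinj : Function.Injective J := by
    intro φ ψ h
    apply AddMonoidHom.toMultiplicativeLeft.injective
    ext x
    exact DFunLike.congr_fun h x
  have hli : LinearIndependent k (fun φ : (S →+ Additive kˣ) => ⇑(J φ)) :=
    (linearIndependent_monoidHom (Multiplicative S) k).comp J hJinj
  exact hli.finite

lemma aux_card_range_mul_ker {G H : Type*} [AddGroup G] [Finite G] [AddGroup H]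
    (f : G →+ H) : Nat.card f.range * Nat.card f.ker = Nat.card G := by
  rw [AddSubgroup.card_eq_card_quotient_mul_card_addSubgroup f.ker]
  congr 1
  exact (Nat.card_congr (QuotientAddGroup.quotientKerEquivRange f).toEquiv).symm

lemma aux_zsmul_mem {ζ ξ : Additive kˣ} (hζ : IsOfFinAddOrder ζ)
    (hdvd : addOrderOf ξ ∣ addOrderOf ζ) : ∃ c : ℤ, c • ζ = ξ := by
  have h1 : IsOfFinOrder ζ.toMul := isOfFinAddOrder_ofMul_iff.mp hζ
  have h2 : ξ.toMul ^ (orderOf ζ.toMul) = 1 := by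
    apply orderOf_dvd_iff_pow_eq_one.mp
    have e1 : addOrderOf ξ = orderOf ξ.toMul := (addOrderOf_ofMul_eq_orderOf ξ.toMul).symm
    have e2 : addOrderOf ζ = orderOf ζ.toMul := (addOrderOf_ofMul_eq_orderOf ζ.toMul).symm
    rw [← e1, ← e2]; exact hdvd
  obtain ⟨c, hc⟩ := Subgroup.mem_zpowers_iff.mp (aux_mem_zpowers h1 h2)
  exact ⟨c, by have hc' := congrArg Additive.ofMul hc; rw [ofMul_zpow] at hc'; exact hc'⟩

lemma aux_comb {ζ ξ : Additive kˣ} (hζ : IsOfFinAddOrder ζ) (hξ : IsOfFinAddOrder ξ) :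
    ∃ α β : ℤ, addOrderOf (α • ζ + β • ξ) = Nat.lcm (addOrderOf ζ) (addOrderOf ξ) := by
  obtain ⟨α, β, h⟩ := aux_lcm (ζ := ζ.toMul) (ξ := ξ.toMul)
    (isOfFinAddOrder_ofMul_iff.mp hζ) (isOfFinAddOrder_ofMul_iff.mp hξ)
  refine ⟨α, β, ?_⟩
  have he : α • ζ + β • ξ = Additive.ofMul (ζ.toMul ^ α * ξ.toMul ^ β) := by
    rw [ofMul_mul, ofMul_zpow, ofMul_zpow]; rfl
  rw [he, addOrderOf_ofMul_eq_orderOf, h]; rfl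

/-- A finite abelian group with an alternating bilinear form valued in `kˣ` has
order equal to the order of the radical times a perfect square. -/
lemma aux_alt_card : ∀ (n : ℕ) (G : Type*) [AddCommGroup G] [Finite G],
    Nat.card G ≤ n → ∀ (μ : G →+ G →+ Additive kˣ), (∀ x, μ x x = 0) →
    ∃ m : ℕ, 0 < m ∧ Nat.card G = Nat.card (AddMonoidHom.ker μ) * m ^ 2 := by
  intro n
  induction n with
  | zero =>
    intro G _ _ hle _ _
    haveI : Nonempty G := ⟨0⟩
    exact absurd (Nat.card_pos.trans_le hle) (lt_irrefl 0)
  | succ n IH =>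
    intro G _ _ hcard μ halt
    haveI : Nonempty G := ⟨0⟩
    have hGpos : 0 < Nat.card G := Nat.card_pos
    by_cases htriv : ∀ x y : G, μ x y = 0
    · refine ⟨1, one_pos, ?_⟩
      have hk : AddMonoidHom.ker μ = ⊤ := by
        ext x
        simp only [AddMonoidHom.mem_ker, AddSubgroup.mem_top, iff_true]
        ext y : 1; exact htriv x y
      rw [hk, one_pow, mul_one]
      exact (Nat.card_congr AddSubgroup.topEquiv.toEquiv).symm
    · push_neg at htriv
      obtain ⟨x₀, y₀, hxy₀⟩ := htriv
      haveI : Fintype G := Fintype.ofFinite G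
      have htor : ∀ u v : G, IsOfFinAddOrder (μ u v) := by
        intro u v
        apply isOfFinAddOrder_iff_nsmul_eq_zero.mpr
        refine ⟨Nat.card G, hGpos, ?_⟩
        rw [← map_nsmul (μ u) (Nat.card G) v, card_nsmul_eq_zero', map_zero]
      obtain ⟨p, -, hmaxp⟩ := Finset.exists_max_image (Finset.univ : Finset (G × G))
        (fun p => addOrderOf (μ p.1 p.2)) ⟨(x₀, y₀), Finset.mem_univ _⟩
      obtain ⟨x, y⟩ := p
      set ζ := μ x y with hζdef
      set n₁ := addOrderOf ζ with hn₁def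
      have hmax : ∀ u v : G, addOrderOf (μ u v) ≤ n₁ := fun u v =>
        hmaxp (u, v) (Finset.mem_univ _)
      have hn₁pos : 0 < n₁ := (htor x y).addOrderOf_pos
      have hn₁2 : 2 ≤ n₁ := by
        have hne : addOrderOf (μ x₀ y₀) ≠ 1 :=
          fun h => hxy₀ (AddMonoid.addOrderOf_eq_one_iff.mp h)
        have hpos := (htor x₀ y₀).addOrderOf_pos
        exact le_trans (by omega) (hmax x₀ y₀)
      have hskew : ∀ u v : G, μ v u = - μ u v := by
        intro u v
        have h := halt (u + v)
        simp only [map_add, AddMonoidHom.add_apply, halt u, halt v, zero_add, add_zero] at h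
        exact eq_neg_of_add_eq_zero_left h
      have smul_apply : ∀ (c : ℤ) (f : G →+ Additive kˣ) (z : G), (c • f) z = c • f z :=
        fun _ _ _ => rfl
      have hdvd1 : ∀ d : G, addOrderOf (μ d x) ∣ n₁ := by
        intro d
        obtain ⟨α, β, hc⟩ := aux_comb (htor x y) (htor d x)
        have heq : α • ζ + β • (μ d x) = μ (β • d - α • y) x := by
          rw [map_sub, map_zsmul, map_zsmul, AddMonoidHom.sub_apply,
            smul_apply, smul_apply, hskew x y, zsmul_neg, sub_neg_eq_add]
          exact add_comm _ _
        have hle := hmax (β • d - α • y) x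
        rw [← heq, hc] at hle
        have hlcm : Nat.lcm n₁ (addOrderOf (μ d x)) = n₁ :=
          le_antisymm hle (Nat.le_of_dvd
            (Nat.lcm_pos hn₁pos (htor d x).addOrderOf_pos) (Nat.dvd_lcm_left _ _))
        exact hlcm ▸ Nat.dvd_lcm_right _ _
      have hdvd2 : ∀ d : G, addOrderOf (μ d y) ∣ n₁ := by
        intro d
        obtain ⟨α, β, hc⟩ := aux_comb (htor x y) (htor d y)
        have heq : α • ζ + β • (μ d y) = μ (β • d + α • x) y := by
          rw [map_add, map_zsmul, map_zsmul, AddMonoidHom.add_apply,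
            smul_apply, smul_apply]
          exact add_comm _ _
        have hle := hmax (β • d + α • x) y
        rw [← heq, hc] at hle
        have hlcm : Nat.lcm n₁ (addOrderOf (μ d y)) = n₁ :=
          le_antisymm hle (Nat.le_of_dvd
            (Nat.lcm_pos hn₁pos (htor d y).addOrderOf_pos) (Nat.dvd_lcm_left _ _))
        exact hlcm ▸ Nat.dvd_lcm_right _ _
      have hmem1 : ∀ d : G, ∃ c : ℤ, c • ζ = μ d x := fun d =>
        aux_zsmul_mem (htor x y) (hdvd1 d)
      have hmem2 : ∀ d : G, ∃ c : ℤ, c • ζ = μ d y := fun d =>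
        aux_zsmul_mem (htor x y) (hdvd2 d)
      set Φ : G →+ (Additive kˣ) × (Additive kˣ) :=
        AddMonoidHom.mk' (fun d => (μ d x, μ d y))
          (by intro a b; simp [map_add, AddMonoidHom.add_apply, Prod.ext_iff]) with hΦdef
      have hΦapp : ∀ d : G, Φ d = (μ d x, μ d y) := fun d => rfl
      have hrange : Φ.range = (AddSubgroup.zmultiples ζ).prod (AddSubgroup.zmultiples ζ) := by
        ext v
        constructor
        · rintro ⟨d, rfl⟩
          rw [AddSubgroup.mem_prod]
          constructor
          · obtain ⟨c, hc⟩ := hmem1 d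
            exact AddSubgroup.mem_zmultiples_iff.mpr ⟨c, hc⟩
          · obtain ⟨c, hc⟩ := hmem2 d
            exact AddSubgroup.mem_zmultiples_iff.mpr ⟨c, hc⟩
        · intro hv
          rw [AddSubgroup.mem_prod] at hv
          obtain ⟨c₁, hc₁⟩ := AddSubgroup.mem_zmultiples_iff.mp hv.1
          obtain ⟨c₂, hc₂⟩ := AddSubgroup.mem_zmultiples_iff.mp hv.2
          refine ⟨c₂ • x - c₁ • y, ?_⟩
          rw [hΦapp]
          have e1 : μ (c₂ • x - c₁ • y) x = c₁ • ζ := by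
            rw [map_sub, map_zsmul, map_zsmul, AddMonoidHom.sub_apply,
              smul_apply, smul_apply, halt x, hskew x y, smul_zero, zsmul_neg,
              zero_sub, neg_neg]
          have e2 : μ (c₂ • x - c₁ • y) y = c₂ • ζ := by
            rw [map_sub, map_zsmul, map_zsmul, AddMonoidHom.sub_apply,
              smul_apply, smul_apply, halt y, smul_zero, sub_zero]
          rw [e1, e2, hc₁, hc₂]
      have hcardrange : Nat.card Φ.range = n₁ * n₁ := by
        rw [hrange, Nat.card_congr (AddSubgroup.prodEquiv _ _).toEquiv, Nat.card_prod,
          Nat.card_zmultiples]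
      have hGsplit : Nat.card G = Nat.card Φ.ker * n₁ ^ 2 := by
        have := aux_card_range_mul_ker Φ
        rw [hcardrange] at this
        rw [← this]; ring
      set D' := Φ.ker with hD'def
      have hD'mem : ∀ d : G, d ∈ D' ↔ (μ d x = 0 ∧ μ d y = 0) := by
        intro d
        rw [hD'def, AddMonoidHom.mem_ker, hΦapp, Prod.ext_iff]
        rfl
      set μ' : D' →+ D' →+ Additive kˣ :=
        AddMonoidHom.mk' (fun d => (μ d.1).comp D'.subtype)
          (by intro a b; ext z; simp [map_add, AddMonoidHom.add_apply]) with hμ'def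
      have hμ'app : ∀ (d z : D'), μ' d z = μ d.1 z.1 := fun d z => rfl
      have halt' : ∀ z : D', μ' z z = 0 := fun z => halt (z : G)
      have hkerle : ∀ d : G, d ∈ AddMonoidHom.ker μ → d ∈ D' := by
        intro d hd
        rw [AddMonoidHom.mem_ker] at hd
        rw [hD'mem]
        constructor <;> · rw [hd]; rfl
      have hker_iff : ∀ d : D', (d ∈ AddMonoidHom.ker μ' ↔ (d : G) ∈ AddMonoidHom.ker μ) := by
        intro d
        constructor
        · intro hd
          rw [AddMonoidHom.mem_ker] at hd ⊢
          ext u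
          obtain ⟨c₁, hc₁⟩ := hmem1 u
          obtain ⟨c₂, hc₂⟩ := hmem2 u
          have hdx : μ d.1 x = 0 := ((hD'mem d.1).mp d.2).1
          have hdy : μ d.1 y = 0 := ((hD'mem d.1).mp d.2).2
          have hu₀ : (u - (c₂ • x - c₁ • y)) ∈ D' := by
            rw [hD'mem]
            constructor
            · rw [map_sub, AddMonoidHom.sub_apply]
              have e1 : μ (c₂ • x - c₁ • y) x = c₁ • ζ := by
                rw [map_sub, map_zsmul, map_zsmul, AddMonoidHom.sub_apply,
                  smul_apply, smul_apply, halt x, hskew x y, smul_zero, zsmul_neg,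
                  zero_sub, neg_neg]
              rw [e1, hc₁, sub_self]
            · rw [map_sub, AddMonoidHom.sub_apply]
              have e2 : μ (c₂ • x - c₁ • y) y = c₂ • ζ := by
                rw [map_sub, map_zsmul, map_zsmul, AddMonoidHom.sub_apply,
                  smul_apply, smul_apply, halt y, smul_zero, sub_zero]
              rw [e2, hc₂, sub_self]
          have h1 : μ (d : G) (u - (c₂ • x - c₁ • y)) = 0 := by
            have h' := DFunLike.congr_fun hd (⟨u - (c₂ • x - c₁ • y), hu₀⟩ : D')
            exact h'
          have h2 : μ (d : G) (c₂ • x - c₁ • y) = 0 := by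
            rw [map_sub, map_zsmul, map_zsmul, hdx, hdy, smul_zero, smul_zero, sub_zero]
          have hsplit : u = (u - (c₂ • x - c₁ • y)) + (c₂ • x - c₁ • y) := by abel
          rw [AddMonoidHom.zero_apply, hsplit, map_add, h1, h2, add_zero]
        · intro hd
          rw [AddMonoidHom.mem_ker] at hd ⊢
          show (μ (d : G)).comp D'.subtype = 0
          rw [hd]
          exact AddMonoidHom.zero_comp _
      have hkercard : Nat.card (AddMonoidHom.ker μ') = Nat.card (AddMonoidHom.ker μ) := by
        apply Nat.card_congr
        exact {
          toFun := fun z => ⟨z.1.1, (hker_iff z.1).mp z.2⟩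
          invFun := fun w => ⟨⟨w.1, hkerle w.1 w.2⟩, (hker_iff ⟨w.1, hkerle w.1 w.2⟩).mpr w.2⟩
          left_inv := fun z => Subtype.ext (Subtype.ext rfl)
          right_inv := fun w => Subtype.ext rfl }
      haveI : Nonempty D' := ⟨0⟩
      have hD'pos : 0 < Nat.card D' := Nat.card_pos
      have hD'le : Nat.card D' ≤ n := by
        have h4 : 4 ≤ n₁ ^ 2 := by
          calc (4:ℕ) = 2 ^ 2 := rfl
          _ ≤ n₁ ^ 2 := Nat.pow_le_pow_left hn₁2 2
        have : Nat.card D' * 4 ≤ Nat.card G := by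
          rw [hGsplit]
          exact Nat.mul_le_mul_left _ h4
        omega
      obtain ⟨m', hm'pos, hm'⟩ := IH D' hD'le μ' halt'
      refine ⟨m' * n₁, Nat.mul_pos hm'pos hn₁pos, ?_⟩
      rw [hGsplit, hm', hkercard]
      ring

end UnitsFacts

section Duality
variable {k : Type*} [Field k] {A : Type*} [AddCommGroup A] [Fintype A]

/-- The orthogonal complement of a subgroup w.r.t. the pairing `e`. -/
def auxPerp (e : A ≃+ (A →+ Additive kˣ)) (S : AddSubgroup A) : AddSubgroup A where
  carrier := {a | ∀ s ∈ S, e a s = 0}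
  zero_mem' := by
    intro s hs
    rw [map_zero]
    rfl
  add_mem' := by
    intro a b ha hb s hs
    rw [map_add, AddMonoidHom.add_apply, ha s hs, hb s hs, add_zero]
  neg_mem' := by
    intro a ha s hs
    rw [map_neg, AddMonoidHom.neg_apply, ha s hs, neg_zero]

variable (e : A ≃+ (A →+ Additive kˣ))

lemma mem_auxPerp {S : AddSubgroup A} {a : A} :
    a ∈ auxPerp e S ↔ ∀ s ∈ S, e a s = 0 := Iff.rfl

lemma auxPerp_card (S : AddSubgroup A) :
    Nat.card (auxPerp e S) * Nat.card S = Nat.card A := by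
  classical
  set res : A →+ (↥S →+ Additive kˣ) := AddMonoidHom.mk' (fun a => (e a).comp S.subtype)
      (by intro a b; ext s; simp [map_add, AddMonoidHom.add_apply]) with hres
  have hker : res.ker = auxPerp e S := by
    ext a
    simp only [AddMonoidHom.mem_ker]
    constructor
    · intro h s hs
      exact DFunLike.congr_fun h (⟨s, hs⟩ : ↥S)
    · intro h
      ext s : 1
      exact h s.1 s.2
  have h1 : Nat.card A ≤ Nat.card (auxPerp e S) * Nat.card S := by
    have hA := aux_card_range_mul_ker res
    have hr : Nat.card res.range ≤ Nat.card S := by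
      haveI : Finite (↥S →+ Additive kˣ) := aux_hom_finite (↥S)
      calc Nat.card res.range ≤ Nat.card (↥S →+ Additive kˣ) :=
            Nat.card_le_card_of_injective _ Subtype.val_injective
        _ ≤ Nat.card ↥S := aux_hom_card_le (↥S)
    calc Nat.card A = Nat.card res.range * Nat.card res.ker := hA.symm
      _ ≤ Nat.card ↥S * Nat.card res.ker := Nat.mul_le_mul_right _ hr
      _ = Nat.card (auxPerp e S) * Nat.card S := by rw [hker, Nat.mul_comm]
  have h2 : Nat.card (auxPerp e S) * Nat.card S ≤ Nat.card A := by
    haveI : Finite (A ⧸ S) := Finite.of_surjective _ (QuotientAddGroup.mk'_surjective S)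
    set Ψ : (A ⧸ S →+ Additive kˣ) → A := fun φ => e.symm (φ.comp (QuotientAddGroup.mk' S))
      with hΨ
    have hΨinj : Function.Injective Ψ := by
      intro φ ψ h
      have h' : φ.comp (QuotientAddGroup.mk' S) = ψ.comp (QuotientAddGroup.mk' S) :=
        e.symm.injective h
      exact (AddMonoidHom.cancel_right (QuotientAddGroup.mk'_surjective S)).mp h'
    have hrange : Set.range Ψ = (auxPerp e S : Set A) := by
      ext a
      constructor
      · rintro ⟨φ, rfl⟩ s hs
        have hz : (QuotientAddGroup.mk' S) s = 0 := (QuotientAddGroup.eq_zero_iff s).mpr hs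
        have : e (Ψ φ) = φ.comp (QuotientAddGroup.mk' S) := e.apply_symm_apply _
        rw [this, AddMonoidHom.comp_apply, hz, map_zero]
      · intro ha
        refine ⟨QuotientAddGroup.lift S (e a) (fun s hs => ha s hs), ?_⟩
        have : (QuotientAddGroup.lift S (e a) (fun s hs => ha s hs)).comp
            (QuotientAddGroup.mk' S) = e a := by
          ext b
          rfl
        rw [hΨ]
        simp only [this]
        exact e.symm_apply_apply a
    have hcard_eq : Nat.card (auxPerp e S) = Nat.card (A ⧸ S →+ Additive kˣ) := by
      rw [← Nat.card_range_of_injective hΨinj]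
      exact (Nat.card_congr (Equiv.setCongr hrange)).symm
    calc Nat.card (auxPerp e S) * Nat.card S
        ≤ Nat.card (A ⧸ S) * Nat.card S := by
          rw [hcard_eq]
          exact Nat.mul_le_mul_right _ (aux_hom_card_le (A ⧸ S))
      _ = Nat.card A := (AddSubgroup.card_eq_card_quotient_mul_card_addSubgroup S).symm
  exact le_antisymm h2 h1

lemma auxPerp_perp (hsym : ∀ a b : A, e a b = e b a) (S : AddSubgroup A) : auxPerp e (auxPerp e S) = S := by
  have hle : S ≤ auxPerp e (auxPerp e S) := by
    intro a ha t ht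
    rw [hsym]
    exact ht a ha
  apply (AddSubgroup.eq_of_le_of_card_ge hle ?_).symm
  have c1 := auxPerp_card e S
  have c2 := auxPerp_card e (auxPerp e S)
  have hSpos : 0 < Nat.card S := Nat.card_pos
  have hPpos : 0 < Nat.card (auxPerp e S) := Nat.card_pos
  nlinarith [c1, c2]

lemma auxPerp_sup (S T : AddSubgroup A) :
    auxPerp e (S ⊔ T) = auxPerp e S ⊓ auxPerp e T := by
  ext a
  simp only [AddSubgroup.mem_inf, mem_auxPerp]
  constructor
  · intro h
    exact ⟨fun s hs => h s (AddSubgroup.mem_sup_left hs),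
      fun t ht => h t (AddSubgroup.mem_sup_right ht)⟩
  · rintro ⟨h1, h2⟩ s hs
    have : S ⊔ T ≤ (e a).ker := by
      apply sup_le
      · intro u hu; exact h1 u hu
      · intro u hu; exact h2 u hu
    exact this hs

lemma auxPerp_inf (hsym : ∀ a b : A, e a b = e b a) (S T : AddSubgroup A) :
    auxPerp e (S ⊓ T) = auxPerp e S ⊔ auxPerp e T := by
  have h := auxPerp_sup e (auxPerp e S) (auxPerp e T)
  rw [auxPerp_perp e hsym S, auxPerp_perp e hsym T] at h
  rw [← h, auxPerp_perp e hsym]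

end Duality


section MainProof
variable {k : Type*} [Field k] {A : Type*} [AddCommGroup A] [Fintype A]
  (q : A → kˣ) (e : A ≃+ (A →+ Additive kˣ))
  (g h : AddAut A)

set_option maxHeartbeats 2000000 in
theorem det_is_homomorphism_mod_squares' 
    (hq : ∀ a, q a = q (-a))
    (he : ∀ a b, Additive.toMul (e a b) = q (a + b) * (q a)⁻¹ * (q b)⁻¹)
    (hg : ∀ a, q (g a) = q a) (hh : ∀ a, q (h a) = q a) :
    ∃ s : ℚ, 0 < s ∧
      (Nat.card (Set.range fun a => (g + h) a - a) : ℚ) * s ^ 2 =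
        (Nat.card (Set.range fun a => g a - a) : ℚ) *
          (Nat.card (Set.range fun a => h a - a) : ℚ) := by
  classical
  -- the quadratic form, additively
  set Q : A → Additive kˣ := fun a => Additive.ofMul (q a) with hQdef
  have he' : ∀ a b : A, e a b = Q (a + b) - Q a - Q b := by
    intro a b
    have h1 : Additive.toMul (e a b) = q (a + b) * (q a)⁻¹ * (q b)⁻¹ := he a b
    have h2 : Additive.toMul (Q (a + b) - Q a - Q b)
        = q (a + b) * (q a)⁻¹ * (q b)⁻¹ := by
      rw [toMul_sub, toMul_sub]
      show q (a + b) / q a / q b = _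
      rw [div_div, div_eq_mul_inv, mul_inv, mul_assoc]
    exact Additive.toMul.injective (h1.trans h2.symm)
  have hsym : ∀ a b : A, e a b = e b a := by
    intro a b
    rw [he' a b, he' b a, add_comm a b]
    exact sub_right_comm _ _ _
  have hQneg : ∀ a : A, Q (-a) = Q a := fun a => (congrArg Additive.ofMul (hq a)).symm
  have hQ0 : Q 0 = 0 := by
    have h00 : (0 : Additive kˣ) = Q (0 + 0) - Q 0 - Q 0 := by
      rw [← he' 0 0, map_zero]
    rw [add_zero, sub_self, zero_sub, eq_comm, neg_eq_zero] at h00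
    exact h00
  have hEaa : ∀ a : A, e a a = Q a + Q a := by
    intro a
    have h1 : e a (-a) = Q 0 - Q a - Q a := by
      rw [he' a (-a), add_neg_cancel, hQneg]
    rw [map_neg, hQ0, zero_sub] at h1
    have h2 := congrArg Neg.neg h1
    rw [neg_neg] at h2
    rw [h2]
    abel
  -- the isometry lemma : e a (f a - a) = - Q (f a - a)
  have hiso : ∀ (f : A ≃+ A), (∀ a, Q (f a) = Q a) → ∀ a : A,
      e a (f a - a) = - Q (f a - a) := by
    intro f hf a
    have h1 : e a (f a - a) = e a (f a) - e a a := map_sub (e a) _ _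
    have h2 : Q (f a - a) = e (f a) (-a) + Q (f a) + Q (-a) := by
      have h3 := he' (f a) (-a)
      rw [← sub_eq_add_neg] at h3
      rw [h3]
      abel
    rw [h1, h2, map_neg, hf a, hQneg, hsym a (f a), hEaa a]
    abel
  -- invariance of the pairing
  have hbil : ∀ (f : A ≃+ A), (∀ a, Q (f a) = Q a) → ∀ u v : A,
      e (f u) (f v) = e u v := by
    intro f hf u v
    rw [he' (f u) (f v), he' u v, ← map_add f, hf (u + v), hf u, hf v]
  have hQg : ∀ a, Q (g a) = Q a := fun a => congrArg Additive.ofMul (hg a)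
  have hQh : ∀ a, Q (h a) = Q a := fun a => congrArg Additive.ofMul (hh a)
  have hQgs : ∀ a, Q (g.symm a) = Q a := by
    intro a
    conv_rhs => rw [← g.apply_symm_apply a]
    exact (hQg (g.symm a)).symm
  have hQgh : ∀ a, Q ((g + h : AddAut A) a) = Q a := by
    intro a
    rw [AddAut.add_apply, hQg, hQh]
  -- the endomorphisms f - 1
  set fg : A →+ A := AddMonoidHom.mk' (fun a => g a - a)
    (by intro a b; show g (a + b) - (a + b) = (g a - a) + (g b - b)
        rw [map_add]; abel) with hfgdef
  set fh : A →+ A := AddMonoidHom.mk' (fun a => h a - a)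
    (by intro a b; show h (a + b) - (a + b) = (h a - a) + (h b - b)
        rw [map_add]; abel) with hfhdef
  set fgh : A →+ A := AddMonoidHom.mk' (fun a => (g + h) a - a)
    (by intro a b
        show (g + h) (a + b) - (a + b) = ((g + h) a - a) + ((g + h) b - b)
        rw [map_add]; abel) with hfghdef
  have hfg_app : ∀ a, fg a = g a - a := fun _ => rfl
  have hfh_app : ∀ a, fh a = h a - a := fun _ => rfl
  have hfgh_app : ∀ a, fgh a = (g + h) a - a := fun _ => rfl
  set Bg := fg.range with hBgdef
  set Bh := fh.range with hBhdef
  set Kg := fg.ker with hKgdef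
  set Kh := fh.ker with hKhdef
  set Kgh := fgh.ker with hKghdef
  have hmemKg : ∀ a : A, a ∈ Kg ↔ g a = a := by
    intro a
    rw [hKgdef, AddMonoidHom.mem_ker, hfg_app, sub_eq_zero]
  have hmemKh : ∀ a : A, a ∈ Kh ↔ h a = a := by
    intro a
    rw [hKhdef, AddMonoidHom.mem_ker, hfh_app, sub_eq_zero]
  have hmemKgh : ∀ a : A, a ∈ Kgh ↔ (g + h) a = a := by
    intro a
    rw [hKghdef, AddMonoidHom.mem_ker, hfgh_app, sub_eq_zero]
  have hmemKg' : ∀ a : A, a ∈ Kg ↔ g.symm a = a := by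
    intro a
    rw [hmemKg, AddEquiv.symm_apply_eq, eq_comm]
  -- membership in Bg via g.symm
  have hmemBg' : ∀ x : A, x ∈ Bg ↔ ∃ a : A, g.symm a - a = x := by
    intro x
    rw [hBgdef, AddMonoidHom.mem_range]
    constructor
    · rintro ⟨a, rfl⟩
      refine ⟨-(g a), ?_⟩
      rw [map_neg, g.symm_apply_apply, hfg_app]
      abel
    · rintro ⟨a, rfl⟩
      refine ⟨-(g.symm a), ?_⟩
      rw [hfg_app, map_neg, g.apply_symm_apply]
      abel
  -- key identities for perp computations
  have hkey_g : ∀ a c : A, e a (g c - c) = e (g.symm a - a) c := by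
    intro a c
    have h1 : e a (g c) = e (g.symm a) c := by
      conv_lhs => rw [← g.apply_symm_apply a]
      exact hbil g hQg (g.symm a) c
    rw [map_sub (e a), h1, map_sub e, AddMonoidHom.sub_apply]
  have hkey_h : ∀ a c : A, e a (h c - c) = e (h.symm a - a) c := by
    intro a c
    have h1 : e a (h c) = e (h.symm a) c := by
      conv_lhs => rw [← h.apply_symm_apply a]
      exact hbil h hQh (h.symm a) c
    rw [map_sub (e a), h1, map_sub e, AddMonoidHom.sub_apply]
  have he_zero : ∀ a : A, (∀ c : A, e a c = 0) → a = 0 := by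
    intro a ha
    apply e.injective
    rw [map_zero]
    ext c : 1
    exact ha c
  have hperpBg : auxPerp e Bg = Kg := by
    ext a
    rw [mem_auxPerp, hmemKg']
    constructor
    · intro hp
      have : ∀ c : A, e (g.symm a - a) c = 0 := by
        intro c
        rw [← hkey_g a c]
        exact hp _ ⟨c, rfl⟩
      have := he_zero _ this
      rwa [sub_eq_zero] at this
    · intro hp s hs
      obtain ⟨c, rfl⟩ := hs
      rw [hfg_app, hkey_g a c, hp, sub_self, map_zero]
      rfl
  have hperpBh : auxPerp e Bh = Kh := by
    ext a
    rw [mem_auxPerp]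
    constructor
    · intro hp
      have : ∀ c : A, e (h.symm a - a) c = 0 := by
        intro c
        rw [← hkey_h a c]
        exact hp _ ⟨c, rfl⟩
      have h6 := he_zero _ this
      rw [sub_eq_zero] at h6
      have h7 := congrArg h h6
      rw [h.apply_symm_apply] at h7
      rw [hmemKh]
      exact h7.symm
    · intro hp s hs
      obtain ⟨c, rfl⟩ := hs
      have : h.symm a = a := by
        rw [AddEquiv.symm_apply_eq, eq_comm]
        exact (hmemKh a).mp hp

      rw [hfh_app, hkey_h a c, this, sub_self, map_zero]
      rfl
  have hperpKg : auxPerp e Kg = Bg := by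
    rw [← hperpBg, auxPerp_perp e hsym]
  have hperpKh : auxPerp e Kh = Bh := by
    rw [← hperpBh, auxPerp_perp e hsym]
  set D := Bg ⊓ Bh with hDdef
  have hperpSup : auxPerp e (Kg ⊔ Kh) = D := by
    rw [auxPerp_sup, hperpKg, hperpKh]
  have hperpD : auxPerp e D = Kg ⊔ Kh := by
    rw [← hperpSup, auxPerp_perp e hsym]
  -- choices of preimages
  have hpre : ∀ x : ↥D, ∃ p : A × A, (g.symm p.1 - p.1 = x) ∧ (h p.2 - p.2 = x) := by
    intro x
    obtain ⟨hx1, hx2⟩ := AddSubgroup.mem_inf.mp x.2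
    obtain ⟨a, ha⟩ := (hmemBg' (x : A)).mp hx1
    obtain ⟨c, hc⟩ := AddMonoidHom.mem_range.mp hx2
    exact ⟨⟨a, c⟩, ha, hc⟩
  set σ : ↥D → A := fun x => (Classical.choose (hpre x)).1 with hσdef
  set τ : ↥D → A := fun x => (Classical.choose (hpre x)).2 with hτdef
  have hσ : ∀ x : ↥D, g.symm (σ x) - σ x = x := fun x => (Classical.choose_spec (hpre x)).1
  have hτ : ∀ x : ↥D, h (τ x) - τ x = x := fun x => (Classical.choose_spec (hpre x)).2
  -- well-definedness
  have hwd_g : ∀ a a' : A, g.symm a - a = g.symm a' - a' →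
      ∀ y : ↥D, e a (y : A) = e a' (y : A) := by
    intro a a' hdiff y
    have hker : a - a' ∈ Kg := by
      rw [hmemKg', map_sub]
      exact sub_eq_sub_iff_sub_eq_sub.mp hdiff
    have h0 : e (a - a') (y : A) = 0 := by
      have hmem : a - a' ∈ auxPerp e Bg := hperpBg ▸ hker
      exact hmem _ (AddSubgroup.mem_inf.mp y.2).1
    rw [map_sub e, AddMonoidHom.sub_apply, sub_eq_zero] at h0
    exact h0
  have hwd_h : ∀ a a' : A, h a - a = h a' - a' →
      ∀ y : ↥D, e a (y : A) = e a' (y : A) := by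
    intro a a' hdiff y
    have hker : a - a' ∈ Kh := by
      rw [hmemKh, map_sub]
      exact sub_eq_sub_iff_sub_eq_sub.mp hdiff
    have h0 : e (a - a') (y : A) = 0 := by
      have hmem : a - a' ∈ auxPerp e Bh := hperpBh ▸ hker
      exact hmem _ (AddSubgroup.mem_inf.mp y.2).2
    rw [map_sub e, AddMonoidHom.sub_apply, sub_eq_zero] at h0
    exact h0
  -- the alternating form on D
  set μ : ↥D →+ ↥D →+ Additive kˣ := AddMonoidHom.mk'
    (fun x => (e (σ x - τ x)).comp D.subtype)
    (by
      intro x x'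
      ext y : 1
      show e (σ (x + x') - τ (x + x')) (y : A)
        = ((e (σ x - τ x)).comp D.subtype + (e (σ x' - τ x')).comp D.subtype) y
      have hg1 : e (σ (x + x')) (y : A) = e (σ x + σ x') (y : A) := by
        apply hwd_g
        rw [hσ (x + x'), map_add]
        push_cast
        rw [← hσ x, ← hσ x']
        abel
      have hh1 : e (τ (x + x')) (y : A) = e (τ x + τ x') (y : A) := by
        apply hwd_h
        rw [hτ (x + x'), map_add]
        push_cast
        rw [← hτ x, ← hτ x']
        abel
      rw [map_sub e, AddMonoidHom.sub_apply, hg1, hh1]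
      show e (σ x + σ x') (y:A) - e (τ x + τ x') (y:A)
        = e (σ x - τ x) (y:A) + e (σ x' - τ x') (y:A)
      rw [map_add e, map_add e, map_sub e, map_sub e, AddMonoidHom.add_apply,
        AddMonoidHom.add_apply, AddMonoidHom.sub_apply, AddMonoidHom.sub_apply]
      abel) with hμdef
  have hμapp : ∀ x y : ↥D, μ x y = e (σ x - τ x) (y : A) := fun x y => rfl
  have haltμ : ∀ x : ↥D, μ x x = 0 := by
    intro x
    rw [hμapp, map_sub e, AddMonoidHom.sub_apply]
    have e1 : e (σ x) (x : A) = - Q (x : A) := by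
      have h5 := hiso g.symm hQgs (σ x)
      rw [show g.symm (σ x) - σ x = (x : A) from hσ x] at h5
      exact h5
    have e2 : e (τ x) (x : A) = - Q (x : A) := by
      have h5 := hiso h hQh (τ x)
      rw [show h (τ x) - τ x = (x : A) from hτ x] at h5
      exact h5
    rw [e1, e2, sub_self]
  -- W as a subgroup
  set ψ : ↥Kgh →+ A := fh.comp Kgh.subtype with hψdef
  set Wsub := ψ.range with hWdef
  have hψapp : ∀ z : ↥Kgh, ψ z = h (z : A) - (z : A) := fun z => rfl
  -- h and g.symm agree on Kgh
  have hKghsymm : ∀ w : A, w ∈ Kgh → h w = g.symm w := by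
    intro w hw
    rw [hmemKgh, AddAut.add_apply] at hw
    have := congrArg g.symm hw
    rwa [g.symm_apply_apply] at this
  -- W ≤ D
  have hWleD : ∀ w : A, w ∈ Wsub → w ∈ D := by
    intro w hw
    obtain ⟨z, rfl⟩ := hw
    rw [hDdef, AddSubgroup.mem_inf]
    constructor
    · rw [hmemBg']
      refine ⟨(z : A), ?_⟩
      rw [hψapp, hKghsymm (z : A) z.2]
    · exact ⟨(z : A), rfl⟩
  -- kernel of μ is W
  have hkerW : ∀ x : ↥D, x ∈ AddMonoidHom.ker μ ↔ (x : A) ∈ Wsub := by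
    intro x
    rw [AddMonoidHom.mem_ker]
    constructor
    · intro hx
      have hperp : σ x - τ x ∈ auxPerp e D := by
        intro s hs
        have := DFunLike.congr_fun hx (⟨s, hs⟩ : ↥D)
        rw [hμapp] at this
        exact this
      rw [hperpD, AddSubgroup.mem_sup] at hperp
      obtain ⟨u, hu, v, hv, huv⟩ := hperp
      set w := σ x - u with hwdef
      have hw2 : w = τ x + v := by
        have h9 : σ x - u - (τ x + v) = (σ x - τ x) - (u + v) := by abel
        rw [hwdef, ← sub_eq_zero, h9, huv, sub_self]
      have hgw : g.symm w - w = (x : A) := by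
        have hu' : g.symm u = u := (hmemKg' u).mp hu
        rw [hwdef, map_sub, hu', ← hσ x]
        abel
      have hhw : h w - w = (x : A) := by
        have hv' : h v = v := (hmemKh v).mp hv
        rw [hw2, map_add, hv', ← hτ x]
        abel
      have hwKgh : w ∈ Kgh := by
        rw [hmemKgh, AddAut.add_apply]
        have : h w = g.symm w := by
          rw [sub_eq_iff_eq_add] at hgw hhw
          rw [hgw, hhw]
        rw [this, g.apply_symm_apply]
      refine ⟨⟨w, hwKgh⟩, ?_⟩
      rw [hψapp]
      exact hhw
    · intro hx
      obtain ⟨z, hz⟩ := hx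
      set w := (z : A) with hwdef
      have hhw : h w - w = (x : A) := by rw [← hz]; rfl
      have hgw : g.symm w - w = (x : A) := by
        rw [← hKghsymm w z.2]
        exact hhw
      have hmem1 : σ x - w ∈ Kg := by
        rw [hmemKg', map_sub]
        exact sub_eq_sub_iff_sub_eq_sub.mpr ((hσ x).trans hgw.symm)
      have hmem2 : τ x - w ∈ Kh := by
        rw [hmemKh, map_sub]
        exact sub_eq_sub_iff_sub_eq_sub.mpr ((hτ x).trans hhw.symm)
      have hperp : σ x - τ x ∈ Kg ⊔ Kh := by
        have hd : σ x - τ x = (σ x - w) - (τ x - w) := by abel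
        rw [hd]
        exact sub_mem (AddSubgroup.mem_sup_left hmem1) (AddSubgroup.mem_sup_right hmem2)
      have hmemP : σ x - τ x ∈ auxPerp e D := by rw [hperpD]; exact hperp
      ext y : 1
      show e (σ x - τ x) (y : A) = 0
      exact hmemP (y : A) y.2
  -- cardinalities
  have hE1 : Nat.card Bg * Nat.card Kg = Nat.card A := aux_card_range_mul_ker fg
  have hE2 : Nat.card Bh * Nat.card Kh = Nat.card A := aux_card_range_mul_ker fh
  have hE3 : Nat.card fgh.range * Nat.card Kgh = Nat.card A := aux_card_range_mul_ker fgh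
  -- sup/inf cardinality
  set co : ↥Kg × ↥Kh →+ A := (Kg.subtype).coprod (Kh.subtype) with hcodef
  have hco_app : ∀ p : ↥Kg × ↥Kh, co p = (p.1 : A) + (p.2 : A) := fun p => rfl
  have hrangeco : co.range = Kg ⊔ Kh := by
    ext a
    rw [AddMonoidHom.mem_range, AddSubgroup.mem_sup]
    constructor
    · rintro ⟨⟨u, v⟩, rfl⟩
      exact ⟨u, u.2, v, v.2, rfl⟩
    · rintro ⟨u, hu, v, hv, rfl⟩
      exact ⟨(⟨u, hu⟩, ⟨v, hv⟩), rfl⟩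
  have hkerco : Nat.card co.ker = Nat.card ((Kg ⊓ Kh : AddSubgroup A)) := by
    apply Nat.card_congr
    refine ⟨fun z => ⟨(z.1.1 : A), AddSubgroup.mem_inf.mpr ⟨z.1.1.2, ?_⟩⟩,
      fun w => ⟨(⟨(w : A), (AddSubgroup.mem_inf.mp w.2).1⟩, ⟨-(w : A), neg_mem (AddSubgroup.mem_inf.mp w.2).2⟩), ?_⟩, ?_, ?_⟩
    · have hz := z.2
      rw [AddMonoidHom.mem_ker, hco_app] at hz
      have : (z.1.1 : A) = -(z.1.2 : A) := eq_neg_of_add_eq_zero_left hz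
      rw [this]
      exact neg_mem z.1.2.2
    · rw [AddMonoidHom.mem_ker, hco_app]
      exact add_neg_cancel _
    · intro z
      have hz := z.2
      rw [AddMonoidHom.mem_ker, hco_app] at hz
      apply Subtype.ext
      apply Prod.ext
      · rfl
      · exact Subtype.ext (neg_eq_of_add_eq_zero_right hz)
    · intro w
      exact Subtype.ext rfl
  have hE4 : Nat.card ((Kg ⊔ Kh : AddSubgroup A)) * Nat.card ((Kg ⊓ Kh : AddSubgroup A))
      = Nat.card Kg * Nat.card Kh := by
    have hA := aux_card_range_mul_ker co
    rw [hrangeco, hkerco] at hA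
    rw [hA, Nat.card_prod]
  have hE5 : Nat.card D * Nat.card ((Kg ⊔ Kh : AddSubgroup A)) = Nat.card A := by
    have := auxPerp_card e (Kg ⊔ Kh)
    rwa [hperpSup] at this
  -- Kgh = K * W
  have hkerψ : Nat.card ψ.ker = Nat.card ((Kg ⊓ Kh : AddSubgroup A)) := by
    apply Nat.card_congr
    have hmem1 : ∀ z : ↥Kgh, z ∈ ψ.ker → ((z : A) ∈ Kg ∧ (z : A) ∈ Kh) := by
      intro z hz
      rw [AddMonoidHom.mem_ker, hψapp, sub_eq_zero] at hz
      have hgz : g (z : A) = (z : A) := by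
        have := (hmemKgh (z : A)).mp z.2
        rw [AddAut.add_apply, hz] at this
        exact this
      exact ⟨(hmemKg _).mpr hgz, (hmemKh _).mpr hz⟩
    have hmem2 : ∀ a : A, a ∈ Kg ⊓ Kh → a ∈ Kgh := by
      intro a ha
      rw [AddSubgroup.mem_inf] at ha
      rw [hmemKgh, AddAut.add_apply, (hmemKh a).mp ha.2, (hmemKg a).mp ha.1]
    refine ⟨fun z => ⟨(z.1 : A), AddSubgroup.mem_inf.mpr (hmem1 z.1 z.2)⟩,
      fun w => ⟨⟨(w : A), hmem2 _ w.2⟩, ?_⟩, fun z => Subtype.ext (Subtype.ext rfl),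
      fun w => Subtype.ext rfl⟩
    · rw [AddMonoidHom.mem_ker, hψapp, sub_eq_zero]
      exact (hmemKh _).mp (AddSubgroup.mem_inf.mp w.2).2
  have hE6 : Nat.card Wsub * Nat.card ((Kg ⊓ Kh : AddSubgroup A)) = Nat.card Kgh := by
    have := aux_card_range_mul_ker ψ
    rwa [hkerψ] at this
  -- the alternating form result
  obtain ⟨m, hmpos, hE7⟩ := aux_alt_card (Nat.card ↥D) ↥D le_rfl μ haltμ
  have hkerμcard : Nat.card (AddMonoidHom.ker μ) = Nat.card Wsub := by
    apply Nat.card_congr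
    exact ⟨fun z => ⟨(z.1 : A), (hkerW z.1).mp z.2⟩,
      fun w => ⟨⟨(w : A), hWleD _ w.2⟩, (hkerW _).mpr w.2⟩,
      fun z => Subtype.ext (Subtype.ext rfl), fun w => Subtype.ext rfl⟩
  rw [hkerμcard] at hE7
  -- put the numbers together
  set nA := Nat.card A with hnAdef
  set nBg := Nat.card Bg
  set nBh := Nat.card Bh
  set nBgh := Nat.card fgh.range
  set nKg := Nat.card Kg
  set nKh := Nat.card Kh
  set nKgh := Nat.card Kgh
  set nSup := Nat.card ((Kg ⊔ Kh : AddSubgroup A))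
  set nInf := Nat.card ((Kg ⊓ Kh : AddSubgroup A))
  set nD := Nat.card ↥D
  set nW := Nat.card Wsub
  have key1 : nBgh * (nW * m) ^ 2 * (nInf * nSup) = nA * nA := by
    calc nBgh * (nW * m) ^ 2 * (nInf * nSup)
        = (nBgh * (nW * nInf)) * ((nW * m ^ 2) * nSup) := by ring
      _ = (nBgh * nKgh) * (nD * nSup) := by rw [hE6, ← hE7]
      _ = nA * nA := by rw [hE3, hE5]
  have key2 : nBg * nBh * (nInf * nSup) = nA * nA := by
    calc nBg * nBh * (nInf * nSup)
        = (nBg * nBh) * (nSup * nInf) := by ring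
      _ = (nBg * nBh) * (nKg * nKh) := by rw [hE4]
      _ = (nBg * nKg) * (nBh * nKh) := by ring
      _ = nA * nA := by rw [hE1, hE2]
  -- positivity
  have hWpos : 0 < nW := Nat.card_pos
  have hInfpos : 0 < nInf := Nat.card_pos
  have hSuppos : 0 < nSup := Nat.card_pos
  -- identify the sets in the statement with the subgroup ranges
  have hsetg : Nat.card (Set.range fun a => g a - a) = nBg :=
    Nat.card_congr (Equiv.setCongr (by rw [hBgdef, AddMonoidHom.coe_range]; rfl)).symm
  have hseth : Nat.card (Set.range fun a => h a - a) = nBh :=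
    Nat.card_congr (Equiv.setCongr (by rw [hBhdef, AddMonoidHom.coe_range]; rfl)).symm
  have hsetgh : Nat.card (Set.range fun a => (g + h) a - a) = nBgh :=
    Nat.card_congr (Equiv.setCongr (by rw [AddMonoidHom.coe_range]; rfl)).symm
  refine ⟨(nW * m : ℕ), by positivity, ?_⟩
  rw [hsetg, hseth, hsetgh]
  have hcast : ((nBgh * (nW * m) ^ 2 : ℕ) : ℚ) * ((nInf * nSup : ℕ) : ℚ)
      = ((nBg * nBh : ℕ) : ℚ) * ((nInf * nSup : ℕ) : ℚ) := by
    rw [← Nat.cast_mul, ← Nat.cast_mul, key1]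
    rw [← key2, Nat.cast_mul]
  have hne : ((nInf * nSup : ℕ) : ℚ) ≠ 0 := by
    positivity
  have := mul_right_cancel₀ hne hcast
  push_cast at this ⊢
  linarith [this]

end MainProof

/-- For a metric group `(A,q)`, the map `det : O(A,q) → ℚˣ_{>0}/(ℚˣ_{>0})²`
sending `g` to the class of `|(g−1)A|` is a group homomorphism: for `g, h ∈ O(A,q)` the
orders `|(gh−1)A|` and `|(g−1)A|·|(h−1)A|` agree modulo squares of positive rationals. -/
theorem det_is_homomorphism_mod_squares
    {k : Type*} [Field k] {A : Type*} [AddCommGroup A] [Fintype A]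
    (q : A → kˣ) (hq : ∀ a, q a = q (-a))
    (e : A ≃+ (A →+ Additive kˣ))
    (he : ∀ a b, Additive.toMul (e a b) = q (a + b) * (q a)⁻¹ * (q b)⁻¹)
    (g h : AddAut A) (hg : ∀ a, q (g a) = q a) (hh : ∀ a, q (h a) = q a) :
    ∃ s : ℚ, 0 < s ∧
      (Nat.card (Set.range fun a => (g + h) a - a) : ℚ) * s ^ 2 =
        (Nat.card (Set.range fun a => g a - a) : ℚ) *
          (Nat.card (Set.range fun a => h a - a) : ℚ) :=
  det_is_homomorphism_mod_squares' q e g h hq he hg hh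
end

section
/- Let L be a finite abelian group, τ a 3-cocycle on L with values in kˣ, and for ℓ in L define T_ℓ(x,y) := τ(ℓ,x,y)·τ(x,y,ℓ)/τ(x,ℓ,y). Then T_ℓ is a 2-cocycle on L for each ℓ, and ℓ ↦ [T_ℓ] is a group homomorphism L → H²(L, kˣ). -/
/-- For a 3-cocycle `τ` on a finite abelian group `L`, the expression
`T_ℓ(x,y) = τ(ℓ,x,y)·τ(x,y,ℓ)/τ(x,ℓ,y)` is a 2-cocycle for each `ℓ`, and
`ℓ ↦ [T_ℓ]` is a group homomorphism `L → H²(L, kˣ)` (i.e. `T_{ℓ+ℓ'}` agrees with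
`T_ℓ · T_{ℓ'}` up to a 2-coboundary). -/
theorem T_is_cocycle_and_homomorphism_to_H2
    {k : Type*} [Field k] {L : Type*} [AddCommGroup L] [Fintype L]
    (τ : L → L → L → kˣ)
    (hτ : ∀ x y z w, τ y z w * τ x (y + z) w * τ x y z = τ (x + y) z w * τ x y (z + w))
    (T : L → L → L → kˣ)
    (hT : ∀ l x y, T l x y = τ l x y * τ x y l * (τ x l y)⁻¹) :
    (∀ l x y z, T l y z * T l x (y + z) = T l (x + y) z * T l x y) ∧
    (∀ l l', ∃ c : L → kˣ, ∀ x y,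
      T (l + l') x y = T l x y * T l' x y * (c y * (c (x + y))⁻¹ * c x)) := by
  have ht : ∀ x y z w : L,
      Additive.ofMul (τ y z w) + Additive.ofMul (τ x (y + z) w) + Additive.ofMul (τ x y z)
        = Additive.ofMul (τ (x + y) z w) + Additive.ofMul (τ x y (z + w)) := by
    intro x y z w
    simpa [← ofMul_mul] using congrArg Additive.ofMul (hτ x y z w)
  have hTt : ∀ l x y : L,
      Additive.ofMul (T l x y)
        = Additive.ofMul (τ l x y) + Additive.ofMul (τ x y l) - Additive.ofMul (τ x l y) := by
    intro l x y
    simp [hT, ← ofMul_mul, ← ofMul_inv, sub_eq_add_neg]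
  have hcomm : ∀ (a b x y : L), Additive.ofMul (τ x (a + b) y) = Additive.ofMul (τ x (b + a) y) := by
    intro a b x y; rw [add_comm]
  have hcomm1 : ∀ (a b x y : L), Additive.ofMul (τ (a + b) x y) = Additive.ofMul (τ (b + a) x y) := by
    intro a b x y; rw [add_comm]
  have hcomm3 : ∀ (a b x y : L), Additive.ofMul (τ x y (a + b)) = Additive.ofMul (τ x y (b + a)) := by
    intro a b x y; rw [add_comm]
  constructor
  · intro l x y z
    apply Additive.ofMul.injective
    rw [ofMul_mul, ofMul_mul, hTt, hTt, hTt, hTt]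
    linear_combination (norm := abel1)
      - ht l x y z + ht x l y z - ht x y l z + ht x y z l
      + hcomm1 x l y z + hcomm y l x z + hcomm3 z l x y
  · intro l l'
    refine ⟨fun x => τ l l' x * τ x l l' * (τ l x l')⁻¹, fun x y => ?_⟩
    apply Additive.ofMul.injective
    simp only [ofMul_mul, ofMul_inv, hTt]
    linear_combination (norm := abel1)
      - ht l l' x y + ht l x l' y - ht l x y l' - ht x l l' y
      + ht x l y l' - ht x y l l'
      + hcomm l' x l y + hcomm1 l x l' y + hcomm3 l' y l x
      - hcomm1 l x y l' - hcomm3 l' y x l - hcomm l y x l'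
end
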